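/- arXiv:1811.02485 — 5 statements merged into one kernel-verified Lean document; each statement's English description precedes it below -/
import Mathlib

section
/- Let γ̄ > 0 and define the lower bound γ_ = √(γ̄ + 1) − 1. If D, I, Y > 0 with Y = D + I, γ̄ = D/I, and the quantization noise q satisfies 0 ≤ q ≤ √(Y·I), then the quantized SINR D/(I + q) is at least γ_ = √(γ̄ + 1) − 1. -/
/-! The bound is attained at the largest admissible noise `q = √(Y·I)`: there, writing
`√(Y·I) = I·√(γ̄ + 1)`, the quantized SINR equals `γ̄ / (√(γ̄ + 1) + 1)`, which is
`√(γ̄ + 1) - 1` after rationalizing. Smaller noise only increases `D / (I + q)`. -/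

open Real

lemma sqrt_add_one_sub_one_eq_div {x : ℝ} (hx : -1 ≤ x) : √(x + 1) - 1 = x / (√(x + 1) + 1) := by
  have hsq : √(x + 1) ^ 2 = x + 1 := sq_sqrt (by linarith)
  rw [eq_div_iff (by positivity)]
  linear_combination hsq

lemma sqrt_add_mul_eq_mul_sqrt_div_add_one {D I : ℝ} (hI : 0 < I) :
    √((D + I) * I) = I * √(D / I + 1) := by
  have hfactor : (D + I) * I = I ^ 2 * (D / I + 1) := by field_simp
  rw [hfactor, sqrt_mul (sq_nonneg I), sqrt_sq hI.le]

theorem quantized_sinr_lower_bound_general (D I Y q γbar : ℝ)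
    (hD : 0 < D) (hI : 0 < I) (hYeq : Y = D + I)
    (hγ : γbar = D / I) (hq0 : 0 ≤ q) (hq : q ≤ Real.sqrt (Y * I)) :
    Real.sqrt (γbar + 1) - 1 ≤ D / (I + q) := by
  subst hYeq hγ
  calc √(D / I + 1) - 1 = D / I / (√(D / I + 1) + 1) :=
        sqrt_add_one_sub_one_eq_div (by linarith [div_pos hD hI])
    _ = D / (I + √((D + I) * I)) := by
        rw [sqrt_add_mul_eq_mul_sqrt_div_add_one hI]
        field_simp
        ring
    _ ≤ D / (I + q) := div_le_div_of_nonneg_left hD.le (by positivity) (by linarith)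

/-- Quantized SINR lower bound: if `Y = D + I`, `γ̄ = D/I` and the quantization noise
satisfies `0 ≤ q ≤ √(Y·I)`, then `D/(I+q) ≥ √(γ̄+1) − 1`. -/
theorem quantized_sinr_lower_bound (D I Y q γbar : ℝ)
    (hD : 0 < D) (hI : 0 < I) (hY : 0 < Y) (hYeq : Y = D + I)
    (hγ : γbar = D / I) (hq0 : 0 ≤ q) (hq : q ≤ Real.sqrt (Y * I)) :
    Real.sqrt (γbar + 1) - 1 ≤ D / (I + q) :=
  quantized_sinr_lower_bound_general D I Y q γbar hD hI hYeq hγ hq0 hq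
end

section
/- If J : ℝ₊ᴹ → ℝ₊ᴹ is two-sided scalable and each component Jᵢ satisfies 0 ≤ Jᵢ(p) ≤ p̄ᵢ for all p, then J has at most one fixed point; equivalently, if p* and p** are both fixed points of J, then p* = p**. -/
/-!
Fixed points are positive: scalability with `p' = p` gives `J p / a < J p`. If `p ≠ q` are
fixed points, let `a > 1` be the largest of the ratios `q i / p i`, `p i / q i`, the least `a`
with `p / a ≤ q ≤ a • p`. Equality holds in some component, whereas scalability applied to
`p, q` makes both inequalities strict for `J p = p` and `J q = q`.
-/

def TwoSidedScalable {ι : Type*} (J : (ι → ℝ) → ι → ℝ) : Prop :=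
  ∀ a : ℝ, 1 < a → ∀ p p' : ι → ℝ, (∀ i, 0 ≤ p i) → (∀ i, 0 ≤ p' i) →
    (∀ i, (1 / a) * p i ≤ p' i ∧ p' i ≤ a * p i) →
    ∀ i, (1 / a) * J p i < J p' i ∧ J p' i < a * J p i

theorem one_lt_max_div_div {x y : ℝ} (hx : 0 < x) (hy : 0 < y) (hxy : x ≠ y) :
    1 < max (y / x) (x / y) := by
  rcases hxy.lt_or_gt with h | h
  · exact lt_max_of_lt_left ((one_lt_div hx).mpr h)
  · exact lt_max_of_lt_right ((one_lt_div hy).mpr h)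

theorem exists_tight_ratio_bound {ι : Type*} [Finite ι] {p q : ι → ℝ}
    (hp : ∀ i, 0 < p i) (hq : ∀ i, 0 < q i) (hne : p ≠ q) :
    ∃ a > 1, (∀ i, (1 / a) * p i ≤ q i ∧ q i ≤ a * p i) ∧
      ∃ j, q j = a * p j ∨ p j = a * q j := by
  obtain ⟨i₀, hi₀⟩ := Function.ne_iff.mp hne
  have : Nonempty ι := ⟨i₀⟩
  set f : ι → ℝ := fun i => max (q i / p i) (p i / q i)
  obtain ⟨j, hj⟩ := Finite.exists_max f
  have hfj : 1 < f j := (one_lt_max_div_div (hp i₀) (hq i₀) hi₀).trans_le (hj i₀)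
  refine ⟨f j, hfj, fun i => ⟨?_, ?_⟩, j, ?_⟩
  · have : p i ≤ f j * q i := (div_le_iff₀ (hq i)).mp ((le_max_right _ _).trans (hj i))
    rw [one_div, inv_mul_le_iff₀ (by linarith)]
    exact this
  · exact (div_le_iff₀ (hp i)).mp ((le_max_left _ _).trans (hj i))
  · rcases max_choice (q j / p j) (p j / q j) with h | h
    · left
      change q j = max _ _ * p j
      rw [h, div_mul_cancel₀ _ (hp j).ne']
    · right
      change p j = max _ _ * q j
      rw [h, div_mul_cancel₀ _ (hq j).ne']

namespace TwoSidedScalable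

variable {ι : Type*} {J : (ι → ℝ) → ι → ℝ}

theorem apply_pos (hJ : TwoSidedScalable J) {p : ι → ℝ} (hp : ∀ i, 0 ≤ p i) (i : ι) :
    0 < J p i := by
  have h := (hJ 2 one_lt_two p p hp hp (fun i => ⟨by linarith [hp i], by linarith [hp i]⟩) i).1
  linarith

theorem eq_of_isFixedPt [Finite ι] (hJ : TwoSidedScalable J) {p q : ι → ℝ}
    (hp : ∀ i, 0 ≤ p i) (hq : ∀ i, 0 ≤ q i)
    (hfp : Function.IsFixedPt J p) (hfq : Function.IsFixedPt J q) : p = q := by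
  by_contra hne
  have hp_pos : ∀ i, 0 < p i := fun i => hfp.eq ▸ hJ.apply_pos hp i
  have hq_pos : ∀ i, 0 < q i := fun i => hfq.eq ▸ hJ.apply_pos hq i
  obtain ⟨a, ha, hbounds, j, hj⟩ := exists_tight_ratio_bound hp_pos hq_pos hne
  have hstrict := hJ a ha p q hp hq hbounds j
  rw [hfp.eq, hfq.eq] at hstrict
  rcases hj with hj | hj
  · exact hstrict.2.ne hj
  · rw [hj, ← mul_assoc, one_div_mul_cancel (by linarith), one_mul] at hstrict
    exact hstrict.1.false

end TwoSidedScalable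

theorem two_sided_scalable_fixed_point_unique_general (M : ℕ)
    (J : (Fin M → ℝ) → Fin M → ℝ)
    (h2ss : ∀ a : ℝ, 1 < a → ∀ p p' : Fin M → ℝ, (∀ i, 0 ≤ p i) → (∀ i, 0 ≤ p' i) →
      (∀ i, (1 / a) * p i ≤ p' i ∧ p' i ≤ a * p i) →
      ∀ i, (1 / a) * J p i < J p' i ∧ J p' i < a * J p i)
    (p₁ p₂ : Fin M → ℝ) (hp₁ : ∀ i, 0 ≤ p₁ i) (hp₂ : ∀ i, 0 ≤ p₂ i)
    (hfix₁ : J p₁ = p₁) (hfix₂ : J p₂ = p₂) :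
    p₁ = p₂ :=
  TwoSidedScalable.eq_of_isFixedPt h2ss hp₁ hp₂ hfix₁ hfix₂

/-- Uniqueness of fixed points of a bounded two-sided scalable power update function:
if `J` is two-sided scalable and `0 ≤ Jᵢ(p) ≤ p̄ᵢ` for all `p`, then any two
(nonnegative) fixed points of `J` coincide. -/
theorem two_sided_scalable_fixed_point_unique (M : ℕ)
    (J : (Fin M → ℝ) → Fin M → ℝ) (pbar : Fin M → ℝ) (hpbar : ∀ i, 0 < pbar i)
    (h2ss : ∀ a : ℝ, 1 < a → ∀ p p' : Fin M → ℝ, (∀ i, 0 ≤ p i) → (∀ i, 0 ≤ p' i) →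
      (∀ i, (1 / a) * p i ≤ p' i ∧ p' i ≤ a * p i) →
      ∀ i, (1 / a) * J p i < J p' i ∧ J p' i < a * J p i)
    (hbd : ∀ p : Fin M → ℝ, ∀ i, 0 ≤ J p i ∧ J p i ≤ pbar i)
    (p₁ p₂ : Fin M → ℝ) (hp₁ : ∀ i, 0 ≤ p₁ i) (hp₂ : ∀ i, 0 ≤ p₂ i)
    (hfix₁ : J p₁ = p₁) (hfix₂ : J p₂ = p₂) :
    p₁ = p₂ :=
  two_sided_scalable_fixed_point_unique_general M J h2ss p₁ p₂ hp₁ hp₂ hfix₁ hfix₂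
end

section
/- For 0 < x < 1 and fixed R > 0, ξ > 0, the two payoff functions U₁(p) = (p/R)ˣ − λ·p and U₂(p) = −(p − ξ·R^{x/(x−1)})² have the same unique maximizer over p > 0 when ξ = (λ/x)^{1/(x−1)}. -/
/-!
`p ↦ (p/R)^x − λp` is strictly concave, so it lies strictly below its tangent line at the critical
point `q`, where `x (q/R)^{x−1} = λR`; with `ξ = (λ/x)^{1/(x−1)}` this critical point is exactly
`q = ξ R^{x/(x−1)}`, the obvious unique maximizer of `−(p − q)²`.
-/

open Real

lemma rpow_lt_rpow_add_mul_sub {a b x : ℝ} (ha : 0 < a) (hb : 0 < b) (hab : a ≠ b)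
    (hx0 : 0 < x) (hx1 : x < 1) :
    a ^ x < b ^ x + x * b ^ (x - 1) * (a - b) := by
  have hne : a / b - 1 ≠ 0 := sub_ne_zero.mpr fun h => hab ((div_eq_one_iff_eq hb.ne').mp h)
  have hge : -1 ≤ a / b - 1 := by linarith [div_pos ha hb]
  calc a ^ x = b ^ x * (1 + (a / b - 1)) ^ x := by
        rw [← mul_rpow hb.le (by linarith), add_sub_cancel, mul_div_cancel₀ _ hb.ne']
    _ < b ^ x * (1 + x * (a / b - 1)) :=
        mul_lt_mul_of_pos_left (rpow_one_add_lt_one_add_mul_self hge hne hx0 hx1) (by positivity)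
    _ = b ^ x + x * b ^ (x - 1) * (a - b) := by
        rw [rpow_sub_one hb.ne']
        field_simp

lemma rpow_sub_mul_lt_of_mul_rpow_sub_one_eq {a b c x : ℝ} (ha : 0 < a) (hb : 0 < b)
    (hab : a ≠ b) (hx0 : 0 < x) (hx1 : x < 1) (hc : x * b ^ (x - 1) = c) :
    a ^ x - c * a < b ^ x - c * b := by
  have := rpow_lt_rpow_add_mul_sub ha hb hab hx0 hx1
  rw [hc] at this
  linarith

lemma mul_rpow_sub_one_critical_eq {x k R : ℝ} (hx0 : 0 < x) (hx1 : x ≠ 1) (hk : 0 < k)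
    (hR : 0 < R) :
    x * ((k / x) ^ (1 / (x - 1)) * R ^ (x / (x - 1)) / R) ^ (x - 1) = k * R := by
  have hx1' : x - 1 ≠ 0 := sub_ne_zero.mpr hx1
  have hquot : (k / x) ^ (1 / (x - 1)) * R ^ (x / (x - 1)) / R
      = ((k / x) * R) ^ (1 / (x - 1)) := by
    rw [mul_div_assoc, ← rpow_sub_one hR.ne', mul_rpow (by positivity) hR.le]
    congr 2
    field_simp
    ring
  rw [hquot, ← rpow_mul (by positivity), one_div_mul_cancel hx1', rpow_one]
  field_simp

theorem payoff_best_response_equivalence_general (x R lam ξ : ℝ)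
    (hx0 : 0 < x) (hx1 : x < 1) (hR : 0 < R) (hlam : 0 < lam)
    (hξeq : ξ = (lam / x) ^ (1 / (x - 1))) :
    ξ * R ^ (x / (x - 1)) ∈ Set.Ioi (0 : ℝ) ∧
      (∀ p ∈ Set.Ioi (0 : ℝ), p ≠ ξ * R ^ (x / (x - 1)) →
        (p / R) ^ x - lam * p <
          (ξ * R ^ (x / (x - 1)) / R) ^ x - lam * (ξ * R ^ (x / (x - 1)))) ∧
      (∀ p ∈ Set.Ioi (0 : ℝ), p ≠ ξ * R ^ (x / (x - 1)) →
        -(p - ξ * R ^ (x / (x - 1))) ^ 2 <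
          -(ξ * R ^ (x / (x - 1)) - ξ * R ^ (x / (x - 1))) ^ 2) := by
  subst hξeq
  set q := (lam / x) ^ (1 / (x - 1)) * R ^ (x / (x - 1))
  have hq_pos : 0 < q := by positivity
  have hcrit : x * (q / R) ^ (x - 1) = lam * R :=
    mul_rpow_sub_one_critical_eq hx0 hx1.ne hlam hR
  refine ⟨hq_pos, fun p (hp : 0 < p) hpq => ?_, fun p _ hpq => ?_⟩
  · have hdiv : p / R ≠ q / R := fun h => hpq ((div_left_inj' hR.ne').mp h)
    have := rpow_sub_mul_lt_of_mul_rpow_sub_one_eq (div_pos hp hR) (div_pos hq_pos hR) hdiv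
      hx0 hx1 hcrit
    rwa [mul_assoc, mul_div_cancel₀ _ hR.ne', mul_assoc, mul_div_cancel₀ _ hR.ne'] at this
  · rw [sub_self, zero_pow two_ne_zero, neg_zero, neg_lt_zero]
    exact sq_pos_of_ne_zero (sub_ne_zero.mpr hpq)

/-- Best-response equivalence: for `0 < x < 1`, `R > 0`, `λ > 0` and
`ξ = (λ/x)^{1/(x−1)}`, the payoffs `U₁(p) = (p/R)^x − λ·p` and
`U₂(p) = −(p − ξ·R^{x/(x−1)})²` have the same unique maximizer
`p* = ξ·R^{x/(x−1)}` over `p > 0`. -/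
theorem payoff_best_response_equivalence (x R lam ξ : ℝ)
    (hx0 : 0 < x) (hx1 : x < 1) (hR : 0 < R) (hlam : 0 < lam) (hξ : 0 < ξ)
    (hξeq : ξ = (lam / x) ^ (1 / (x - 1))) :
    ξ * R ^ (x / (x - 1)) ∈ Set.Ioi (0 : ℝ) ∧
      (∀ p ∈ Set.Ioi (0 : ℝ), p ≠ ξ * R ^ (x / (x - 1)) →
        (p / R) ^ x - lam * p <
          (ξ * R ^ (x / (x - 1)) / R) ^ x - lam * (ξ * R ^ (x / (x - 1)))) ∧
      (∀ p ∈ Set.Ioi (0 : ℝ), p ≠ ξ * R ^ (x / (x - 1)) →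
        -(p - ξ * R ^ (x / (x - 1))) ^ 2 <
          -(ξ * R ^ (x / (x - 1)) - ξ * R ^ (x / (x - 1))) ^ 2) :=
  payoff_best_response_equivalence_general x R lam ξ hx0 hx1 hR hlam hξeq
end

section
/- If I : ℝ₊ → ℝ₊ satisfies the strict two-sided scaling property ((1/a)·I(R) < I(R′) < a·I(R) whenever a > 1 and (1/a)·R ≤ R′ ≤ a·R), then for any constant p̄ > 0, the clipped function I^H(R) = min(p̄, I(R)) also satisfies the same strict two-sided scaling property. -/
/-!
Multiplication by `a > 0` commutes with `min`, so `a * min p̄ (I R) = min (a * p̄) (a * I R)`,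
and `min` is strictly monotone in both arguments jointly. The `I` arguments are compared by the
hypothesis on `I`, the constant ones by `p̄ / a < p̄ < a * p̄`.
-/

section ClipBounds

variable {R : Type*} [Semiring R] [LinearOrder R] [PosMulMono R] {c p x y : R}

theorem mul_min_lt_min_of_mul_lt (hc : 0 ≤ c) (hcp : c * p < p) (h : c * x < y) :
    c * min p x < min p y := by
  rw [mul_min_of_nonneg _ _ hc]
  exact min_lt_min hcp h

theorem min_lt_mul_min_of_lt_mul (hc : 0 ≤ c) (hcp : p < c * p) (h : y < c * x) :
    min p y < c * min p x := by
  rw [mul_min_of_nonneg _ _ hc]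
  exact min_lt_min hcp h

end ClipBounds

theorem clipped_power_update_two_sided_scalable_general (I : ℝ → ℝ)
    (hI : ∀ a R R' : ℝ, 1 < a → 0 < R → 0 < R' → (1 / a) * R ≤ R' → R' ≤ a * R →
      (1 / a) * I R < I R' ∧ I R' < a * I R)
    (pbar : ℝ) (hpbar : 0 < pbar) :
    ∀ a R R' : ℝ, 1 < a → 0 < R → 0 < R' → (1 / a) * R ≤ R' → R' ≤ a * R →
      (1 / a) * min pbar (I R) < min pbar (I R') ∧
        min pbar (I R') < a * min pbar (I R) := by
  intro a R R' ha hR hR' hR'_lower hR'_upper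
  obtain ⟨hI_lower, hI_upper⟩ := hI a R R' ha hR hR' hR'_lower hR'_upper
  have ha₀ : 0 < a := one_pos.trans ha
  have hpbar_shrink : (1 / a) * pbar < pbar :=
    mul_lt_of_lt_one_left hpbar ((div_lt_one ha₀).2 ha)
  have hpbar_grow : pbar < a * pbar := lt_mul_left hpbar ha
  exact ⟨mul_min_lt_min_of_mul_lt (by positivity) hpbar_shrink hI_lower,
    min_lt_mul_min_of_lt_mul ha₀.le hpbar_grow hI_upper⟩

/-- Clipping by a positive maximum power preserves the strict two-sided scaling
property: if `I` is strictly two-sided scalable, so is `I^H(R) = min(p̄, I(R))`. -/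
theorem clipped_power_update_two_sided_scalable (I : ℝ → ℝ)
    (hInonneg : ∀ R : ℝ, 0 < R → 0 ≤ I R)
    (hI : ∀ a R R' : ℝ, 1 < a → 0 < R → 0 < R' → (1 / a) * R ≤ R' → R' ≤ a * R →
      (1 / a) * I R < I R' ∧ I R' < a * I R)
    (pbar : ℝ) (hpbar : 0 < pbar) :
    ∀ a R R' : ℝ, 1 < a → 0 < R → 0 < R' → (1 / a) * R ≤ R' → R' ≤ a * R →
      (1 / a) * min pbar (I R) < min pbar (I R') ∧
        min pbar (I R') < a * min pbar (I R) :=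
  clipped_power_update_two_sided_scalable_general I hI pbar hpbar
end

section
/- Let G = diag(γ₁, …, γₙ) with γᵢ > 0, H an n×n entrywise-nonnegative matrix with zero diagonal, and g ∈ ℝⁿ with gᵢ > 0. If the spectral radius ρ(GH) < 1, then (I − GH)⁻¹ = Σ_{k=0}^∞ (GH)ᵏ exists and is entrywise nonnegative, and p* = (I − GH)⁻¹ g is a nonnegative solution of (I − GH)p = g; moreover p* is Pareto-minimal among all p ≥ 0 with (I − GH)p ≥ g, i.e., every such p satisfies p ≥ p* componentwise. -/
/-!
Gelfand's formula turns `ρ(GH) < 1` into geometric decay of `‖(GH)ᵏ‖`, so the Neumann series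
converges and inverts `I − GH`. As `GH` is entrywise nonnegative, so are its powers and hence
`(I − GH)⁻¹`; a nonnegative matrix is monotone on vectors, so `(I − GH)p ≥ g` gives
`p = (I − GH)⁻¹ (I − GH) p ≥ (I − GH)⁻¹ g`.
-/

open Matrix Filter
open scoped NNReal ENNReal

theorem spectralRadius_lt_one_of_forall_norm_lt_one {𝕜 A : Type*} [NormedField 𝕜]
    [ProperSpace 𝕜] [NormedRing A] [NormedAlgebra 𝕜 A] [CompleteSpace A] {a : A}
    (h : ∀ z ∈ spectrum 𝕜 a, ‖z‖ < 1) : spectralRadius 𝕜 a < 1 := by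
  rcases (spectrum 𝕜 a).eq_empty_or_nonempty with h_empty | h_ne
  · simp [spectralRadius, h_empty]
  · simpa using spectrum.spectralRadius_lt_of_forall_lt_of_nonempty h_ne (r := 1)
      fun z hz => by simpa [← NNReal.coe_lt_coe] using h z hz

theorem summable_norm_pow_of_spectralRadius_lt_one {A : Type*} [NormedRing A]
    [NormedAlgebra ℂ A] [CompleteSpace A] {a : A} (h : spectralRadius ℂ a < 1) :
    Summable fun k : ℕ => ‖a ^ k‖ := by
  obtain ⟨r, hρr, hr1⟩ := ENNReal.lt_iff_exists_nnreal_btwn.mp h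
  have h_root : ∀ᶠ k : ℕ in atTop, (‖a ^ k‖₊ : ℝ≥0∞) ^ (1 / k : ℝ) < r :=
    (spectrum.pow_nnnorm_pow_one_div_tendsto_nhds_spectralRadius a).eventually_lt_const hρr
  refine .of_norm_bounded_eventually_nat
    (summable_geometric_of_lt_one r.coe_nonneg (by exact_mod_cast hr1)) ?_
  filter_upwards [h_root, eventually_ne_atTop 0] with k hk hk0
  rw [one_div, ENNReal.rpow_inv_lt_iff (by positivity), ENNReal.rpow_natCast] at hk
  have hk_le : ‖a ^ k‖₊ ≤ r ^ k := by exact_mod_cast hk.le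
  simpa using NNReal.coe_le_coe.mpr hk_le

namespace Matrix

variable {l m n R : Type*}

section LinftyOp

open scoped Matrix.Norms.Operator

theorem linfty_opNorm_map_eq [Fintype m] [Fintype n] {α β : Type*} [SeminormedAddCommGroup α]
    [SeminormedAddCommGroup β] (M : Matrix m n α) (f : α → β) (hf : ∀ a, ‖f a‖₊ = ‖a‖₊) :
    ‖M.map f‖ = ‖M‖ := by
  rw [← coe_nnnorm, ← coe_nnnorm, linfty_opNNNorm_def, linfty_opNNNorm_def]
  simp [hf]

theorem summable_pow_of_forall_norm_lt_one [Fintype n] [DecidableEq n] {M : Matrix n n ℝ}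
    (h : ∀ μ ∈ spectrum ℂ (M.map Complex.ofReal), ‖μ‖ < 1) :
    Summable fun k : ℕ => M ^ k := by
  have h_complex := summable_norm_pow_of_spectralRadius_lt_one
    (spectralRadius_lt_one_of_forall_norm_lt_one h)
  refine .of_norm ?_
  convert h_complex using 2 with k
  rw [← linfty_opNorm_map_eq (M ^ k) Complex.ofReal fun x => by simp]
  exact congrArg norm (M.map_pow Complex.ofRealHom k)

end LinftyOp

def IsNonneg [Zero R] [LE R] (M : Matrix m n R) : Prop := ∀ i j, 0 ≤ M i j

section OrderedSemiring

variable [Semiring R] [PartialOrder R] [IsOrderedRing R]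

theorem IsNonneg.mul [Fintype m] {A : Matrix l m R} {B : Matrix m n R} (hA : A.IsNonneg)
    (hB : B.IsNonneg) : (A * B).IsNonneg := fun i j =>
  Finset.sum_nonneg fun k _ => mul_nonneg (hA i k) (hB k j)

theorem isNonneg_one [DecidableEq n] : (1 : Matrix n n R).IsNonneg := fun i j => by
  rw [one_apply]
  split_ifs <;> simp

theorem IsNonneg.pow [Fintype n] [DecidableEq n] {M : Matrix n n R} (hM : M.IsNonneg) (k : ℕ) :
    (M ^ k).IsNonneg := by
  induction k with
  | zero => simpa using isNonneg_one
  | succ k ih => simpa only [pow_succ] using ih.mul hM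

theorem IsNonneg.tsum [TopologicalSpace R] [OrderClosedTopology R] {ι : Type*}
    {f : ι → Matrix m n R} (hf : ∀ k, (f k).IsNonneg) : (∑' k, f k).IsNonneg := by
  by_cases hs : Summable f
  · exact fun i j => (Pi.hasSum.mp (Pi.hasSum.mp hs.hasSum i) j).nonneg fun k => hf k i j
  · rw [tsum_eq_zero_of_not_summable hs]
    exact fun _ _ => le_rfl

theorem IsNonneg.mulVec_mono [Fintype n] {M : Matrix m n R} (hM : M.IsNonneg) {v w : n → R} (h : v ≤ w) :
    M *ᵥ v ≤ M *ᵥ w := fun i =>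
  Finset.sum_le_sum fun j _ => mul_le_mul_of_nonneg_left (h j) (hM i j)

theorem IsNonneg.mulVec_nonneg [Fintype n] {M : Matrix m n R} (hM : M.IsNonneg) {v : n → R} (hv : 0 ≤ v) :
    0 ≤ M *ᵥ v := by
  simpa using hM.mulVec_mono hv

theorem IsNonneg.mulVec_le_of_le_mulVec [Fintype m] [Fintype n] [DecidableEq m] {M : Matrix m n R} {B : Matrix n m R}
    (hM : M.IsNonneg) (hMB : M * B = 1) {v : n → R} {p : m → R} (h : v ≤ B *ᵥ p) :
    M *ᵥ v ≤ p :=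
  calc M *ᵥ v ≤ M *ᵥ (B *ᵥ p) := hM.mulVec_mono h
    _ = p := by rw [mulVec_mulVec, hMB, one_mulVec]

end OrderedSemiring

end Matrix

theorem power_control_perron_frobenius_general (n : ℕ) (γ : Fin n → ℝ)
    (H : Matrix (Fin n) (Fin n) ℝ) (g : Fin n → ℝ)
    (hγ : ∀ i, 0 < γ i) (hH : ∀ i j, 0 ≤ H i j)
    (hg : ∀ i, 0 < g i)
    (hρ : ∀ μ ∈ spectrum ℂ
      (((Matrix.diagonal γ * H).map (Complex.ofReal : ℝ → ℂ))),
      ‖μ‖ < 1) :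
    IsUnit (1 - Matrix.diagonal γ * H) ∧
      Summable (fun k : ℕ => (Matrix.diagonal γ * H) ^ k) ∧
      (1 - Matrix.diagonal γ * H)⁻¹ = (∑' k : ℕ, (Matrix.diagonal γ * H) ^ k) ∧
      (∀ i j, 0 ≤ ((1 - Matrix.diagonal γ * H)⁻¹) i j) ∧
      (∀ i, 0 ≤ ((1 - Matrix.diagonal γ * H)⁻¹ *ᵥ g) i) ∧
      (1 - Matrix.diagonal γ * H) *ᵥ ((1 - Matrix.diagonal γ * H)⁻¹ *ᵥ g) = g ∧
      (∀ p : Fin n → ℝ, (∀ i, 0 ≤ p i) →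
        (∀ i, g i ≤ ((1 - Matrix.diagonal γ * H) *ᵥ p) i) →
        ∀ i, ((1 - Matrix.diagonal γ * H)⁻¹ *ᵥ g) i ≤ p i) := by
  set A := diagonal γ * H
  have hA : A.IsNonneg := fun i j => by
    simpa [A, diagonal_mul] using mul_nonneg (hγ i).le (hH i j)
  have hsum : Summable fun k : ℕ => A ^ k := summable_pow_of_forall_norm_lt_one hρ
  have hleft : (1 - A) * ∑' k : ℕ, A ^ k = 1 := hsum.one_sub_mul_tsum_pow
  have hright : (∑' k : ℕ, A ^ k) * (1 - A) = 1 := hsum.tsum_pow_mul_one_sub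
  have hinv : (1 - A)⁻¹ = ∑' k : ℕ, A ^ k := inv_eq_right_inv hleft
  have hinv_nonneg : ((1 - A)⁻¹).IsNonneg := hinv ▸ IsNonneg.tsum hA.pow
  refine ⟨⟨⟨_, _, hleft, hright⟩, rfl⟩, hsum, hinv, hinv_nonneg,
    hinv_nonneg.mulVec_nonneg fun i => (hg i).le, ?_,
    fun p _ hp => hinv_nonneg.mulVec_le_of_le_mulVec (hinv ▸ hright) hp⟩
  rw [mulVec_mulVec, hinv, hleft, one_mulVec]

/-- Perron–Frobenius feasibility and Pareto-optimality for power control: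
with `G = diag(γ)` (targets `γᵢ > 0`), `H` entrywise nonnegative with zero
diagonal, `g > 0`, and spectral radius of `GH` (all complex eigenvalues) `< 1`,
the matrix `I − GH` is invertible with
`(I − GH)⁻¹ = Σ_{k=0}^∞ (GH)ᵏ` entrywise nonnegative, and
`p* = (I − GH)⁻¹ g` is a nonnegative solution of `(I − GH)p = g` which is
Pareto-minimal among all `p ≥ 0` with `(I − GH)p ≥ g`. -/
theorem power_control_perron_frobenius (n : ℕ) (γ : Fin n → ℝ)
    (H : Matrix (Fin n) (Fin n) ℝ) (g : Fin n → ℝ)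
    (hγ : ∀ i, 0 < γ i) (hH : ∀ i j, 0 ≤ H i j) (hHdiag : ∀ i, H i i = 0)
    (hg : ∀ i, 0 < g i)
    (hρ : ∀ μ ∈ spectrum ℂ
      (((Matrix.diagonal γ * H).map (Complex.ofReal : ℝ → ℂ))),
      ‖μ‖ < 1) :
    IsUnit (1 - Matrix.diagonal γ * H) ∧
      Summable (fun k : ℕ => (Matrix.diagonal γ * H) ^ k) ∧
      (1 - Matrix.diagonal γ * H)⁻¹ = (∑' k : ℕ, (Matrix.diagonal γ * H) ^ k) ∧
      (∀ i j, 0 ≤ ((1 - Matrix.diagonal γ * H)⁻¹) i j) ∧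
      (∀ i, 0 ≤ ((1 - Matrix.diagonal γ * H)⁻¹ *ᵥ g) i) ∧
      (1 - Matrix.diagonal γ * H) *ᵥ ((1 - Matrix.diagonal γ * H)⁻¹ *ᵥ g) = g ∧
      (∀ p : Fin n → ℝ, (∀ i, 0 ≤ p i) →
        (∀ i, g i ≤ ((1 - Matrix.diagonal γ * H) *ᵥ p) i) →
        ∀ i, ((1 - Matrix.diagonal γ * H)⁻¹ *ᵥ g) i ≤ p i) :=
  power_control_perron_frobenius_general n γ H g hγ hH hg hρ
end
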